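/- arXiv:1509.06357 — 2 statements merged into one kernel-verified Lean document; each statement's English description precedes it below -/
import Mathlib

section
/- Let k ≥ 1, let α and β be two k-colorings of a finite simple graph G = (V,E), and let v be a vertex of G of degree at most k−2. Then C_k(G) contains a path from α to β if and only if C_k(G−v) contains a path from the restriction of α to V∖{v} to the restriction of β to V∖{v}. -/
open SimpleGraph

/-- A proper `k`-coloring of a graph. -/
def IsColoring {W : Type*} (G : SimpleGraph W) (k : ℕ) (α : W → Fin k) : Prop :=
  ∀ u v : W, G.Adj u v → α u ≠ α v

/-- The `k`-color graph `C_k(G)`: nodes are proper `k`-colorings of `G`,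
two colorings being adjacent iff they differ on exactly one vertex. -/
def colorGraph {W : Type*} (G : SimpleGraph W) (k : ℕ) :
    SimpleGraph {α : W → Fin k // IsColoring G k α} where
  Adj α β := ∃! w, α.1 w ≠ β.1 w
  symm := by
    constructor
    rintro α β ⟨w, hw, hu⟩
    exact ⟨w, hw.symm, fun u hu' => hu u hu'.symm⟩
  loopless := by
    constructor
    rintro α ⟨w, hw, -⟩
    exact hw rfl

/-- The subgraph of a labeled graph consisting of the edges between
equally labeled nodes. -/
def sameLabelSub {N L : Type*} (H : SimpleGraph N) (f : N → L) : SimpleGraph N where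
  Adj x y := H.Adj x y ∧ f x = f y
  symm := ⟨fun _ _ h => ⟨h.1.symm, h.2.symm⟩⟩
  loopless := ⟨fun x h => H.irrefl h.1⟩

/-- The quotient graph obtained from a labeled graph by contracting every
(maximal) connected set of equally labeled nodes (i.e. every label component)
into a single node. -/
def quotGraph {N L : Type*} (H : SimpleGraph N) (f : N → L) :
    SimpleGraph (sameLabelSub H f).ConnectedComponent where
  Adj c d := c ≠ d ∧ ∃ a b, (sameLabelSub H f).connectedComponentMk a = c ∧
      (sameLabelSub H f).connectedComponentMk b = d ∧ H.Adj a b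
  symm := by
    constructor
    rintro c d ⟨hne, a, b, ha, hb, hab⟩
    exact ⟨hne.symm, b, a, hb, ha, hab.symm⟩
  loopless := ⟨fun c h => h.1 rfl⟩

/-- The common label of a label component. -/
def quotLabel {N L : Type*} (H : SimpleGraph N) (f : N → L) :
    (sameLabelSub H f).ConnectedComponent → L :=
  SimpleGraph.ConnectedComponent.lift f (by
    intro v w p hp
    clear hp
    induction p with
    | nil => rfl
    | cons h _ ih => exact (h : H.Adj _ _ ∧ f _ = f _).2.trans ih)

/-- The label of a coloring: its restriction to the terminal set `T`. -/
def csgLabelFun {W : Type*} (G : SimpleGraph W) (k : ℕ) (T : Set W) :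
    {α : W → Fin k // IsColoring G k α} → (T → Fin k) :=
  fun α t => α.1 t.1

/-- The node set of the contracted solution graph: the label components. -/
abbrev CSGNode {W : Type*} (G : SimpleGraph W) (k : ℕ) (T : Set W) :=
  (sameLabelSub (colorGraph G k) (csgLabelFun G k T)).ConnectedComponent

/-- The contracted solution graph `C^c_k(G,T)`. -/
def CSG {W : Type*} (G : SimpleGraph W) (k : ℕ) (T : Set W) : SimpleGraph (CSGNode G k T) :=
  quotGraph (colorGraph G k) (csgLabelFun G k T)

/-- The `γ`-node of the contracted solution graph: the label component containing `γ`. -/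
def csgNode {W : Type*} (G : SimpleGraph W) (k : ℕ) (T : Set W)
    (γ : {α : W → Fin k // IsColoring G k α}) : CSGNode G k T :=
  (sameLabelSub (colorGraph G k) (csgLabelFun G k T)).connectedComponentMk γ

/-- The label of a node of the contracted solution graph: the common restriction
to `T` of its colorings. -/
def csgLabel {W : Type*} (G : SimpleGraph W) (k : ℕ) (T : Set W) :
    CSGNode G k T → (T → Fin k) :=
  quotLabel (colorGraph G k) (csgLabelFun G k T)

/-- The restriction of a proper coloring to an induced subgraph. -/
def restrictColoring {W : Type*} (G : SimpleGraph W) (k : ℕ) (S : Set W)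
    (γ : {α : W → Fin k // IsColoring G k α}) :
    {α : S → Fin k // IsColoring (G.induce S) k α} :=
  ⟨fun u => γ.1 u.1, fun u w h => γ.2 u.1 w.1 h⟩

/-- A graph is chordal if it contains no induced cycle of length greater than 3. -/
def Chordal {W : Type*} (G : SimpleGraph W) : Prop :=
  ∀ n : ℕ, 4 ≤ n → IsEmpty (SimpleGraph.cycleGraph n ↪g G)

/-- `S` is a vertex cut: `G - S` is disconnected. -/
def IsVertexCut {W : Type*} (G : SimpleGraph W) (S : Set W) : Prop :=
  ¬ (G.induce Sᶜ).Preconnected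

/-- `G` is `l`-connected. -/
def LConnected {W : Type*} (G : SimpleGraph W) (l : ℕ) : Prop :=
  G.Connected ∧ l + 1 ≤ Nat.card W ∧ ∀ S : Set W, IsVertexCut G S → l ≤ S.ncard

/-- A labeled graph `(H,ℓ)`, whose labels are `k`-colorings of the complete graph
on a vertex (type) `S`, is an `(|S|,k)`-color-complete graph. -/
def IsColorComplete {N S : Type*} (k : ℕ) (H : SimpleGraph N) (ℓ : N → S → Fin k) : Prop :=
  (∀ x, Function.Injective (ℓ x)) ∧
  (∀ f : S → Fin k, Function.Injective f → ∃! x, ℓ x = f) ∧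
  (∀ x y, H.Adj x y ↔ ∃! s, ℓ x s ≠ ℓ y s)

/-- The injective neighborhood property. -/
def INP {N L : Type*} (H : SimpleGraph N) (ℓ : N → L) : Prop :=
  ∀ u v w : N, H.Adj u v → H.Adj u w → v ≠ w → ℓ v ≠ ℓ w

/-- The weight `w(P)` of a walk `P` in a labeled graph: the sum over the vertices `x`
of `P` of the number of colors used by labels of neighbors of `x` in `P` but not by
the label of `x`. -/
noncomputable def walkWeight {N S : Type*} {k : ℕ} {G : SimpleGraph N} (ℓ : N → S → Fin k)
    {a b : N} (P : G.Walk a b) : ℕ :=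
  letI := Classical.decEq N
  ∑ x ∈ P.support.toFinset,
    ((⋃ y ∈ P.toSubgraph.neighborSet x, Set.range (ℓ y)) \ Set.range (ℓ x)).ncard

/-- The vertex set of `G - v`. -/
def delSet {V : Type*} (v : V) : Set V := {u | u ≠ v}

/-- The terminal set `T \ {v}`, viewed as a set of vertices of `G - v`. -/
def Tdel {V : Type*} (T : Set V) (v : V) : Set ↥(delSet v) := {u | u.1 ∈ T}

/- Deleting `v` forgets one vertex of each coloring, so walks in `C_k(G)` project to walks in
`C_k(G - v)`. Conversely, a step of `C_k(G - v)` recolors some `u ≠ v` with a color `c'`. Since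
`v` has at most `k - 2` neighbors, some color `c ≠ c'` is missing from them; recoloring `v`
with `c` first and then `u` with `c'` lifts the step to two steps of `C_k(G)`, because `v` no
longer blocks `c'` at `u`. -/

variable {W : Type*} {G : SimpleGraph W} {k : ℕ}

theorem colorGraph_reachable_of_forall_ne (α β : {f : W → Fin k // IsColoring G k f}) (w : W)
    (h : ∀ x, x ≠ w → α.1 x = β.1 x) : (colorGraph G k).Reachable α β := by
  by_cases hw : α.1 w = β.1 w
  · have hαβ : α = β := Subtype.ext <| funext fun x => by
      rcases eq_or_ne x w with rfl | hx
      exacts [hw, h x hx]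
    exact hαβ ▸ Reachable.refl α
  · exact Adj.reachable ⟨w, hw, fun y hy => not_imp_comm.1 (h y) hy⟩

theorem IsColoring.update [DecidableEq W] {f : W → Fin k} (hf : IsColoring G k f) {w : W}
    {c : Fin k} (hc : ∀ y, G.Adj w y → f y ≠ c) : IsColoring G k (Function.update f w c) := by
  intro x y hxy
  rcases eq_or_ne x w with rfl | hx
  · rw [Function.update_self, Function.update_of_ne (G.ne_of_adj hxy).symm]
    exact (hc y hxy).symm
  rcases eq_or_ne y w with rfl | hy
  · rw [Function.update_self, Function.update_of_ne hx]
    exact hc x hxy.symm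
  rw [Function.update_of_ne hx, Function.update_of_ne hy]
  exact hf x y hxy

theorem exists_ne_forall_adj_ne {v : W} [Fintype (G.neighborSet v)] (hdeg : G.degree v + 1 < k)
    (f : W → Fin k) (c₀ : Fin k) : ∃ c, c ≠ c₀ ∧ ∀ y, G.Adj v y → f y ≠ c := by
  classical
  have hcard :
      (insert c₀ ((G.neighborFinset v).image f)).card < (Finset.univ : Finset (Fin k)).card :=
    calc _ ≤ ((G.neighborFinset v).image f).card + 1 := Finset.card_insert_le _ _
      _ ≤ G.degree v + 1 := by grw [Finset.card_image_le, card_neighborFinset_eq_degree]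
      _ < _ := by simpa using hdeg
  obtain ⟨c, -, hc⟩ := Finset.exists_mem_notMem_of_card_lt_card hcard
  simp only [Finset.mem_insert, Finset.mem_image, mem_neighborFinset, not_or, not_exists,
    not_and] at hc
  exact ⟨c, hc.1, hc.2⟩

theorem colorGraph_reachable_restrictColoring_of_adj (S : Set W)
    {α β : {f : W → Fin k // IsColoring G k f}} (h : (colorGraph G k).Adj α β) :
    (colorGraph (G.induce S) k).Reachable
      (restrictColoring G k S α) (restrictColoring G k S β) := by
  obtain ⟨w, -, hw⟩ := h
  by_cases hwS : w ∈ S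
  · exact colorGraph_reachable_of_forall_ne _ _ ⟨w, hwS⟩ fun x hx =>
      not_imp_comm.1 (fun hne => Subtype.ext (hw x hne)) hx
  · have hαβ : restrictColoring G k S α = restrictColoring G k S β :=
      Subtype.ext <| funext fun x => not_imp_comm.1 (fun hne => hw x hne ▸ x.2) hwS
    exact hαβ ▸ Reachable.refl _

theorem colorGraph_reachable_restrictColoring (S : Set W)
    {α β : {f : W → Fin k // IsColoring G k f}} (h : (colorGraph G k).Reachable α β) :
    (colorGraph (G.induce S) k).Reachable
      (restrictColoring G k S α) (restrictColoring G k S β) := by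
  rw [reachable_iff_reflTransGen] at h ⊢
  exact h.lift' _ fun _ _ hadj =>
    (reachable_iff_reflTransGen _ _).1 (colorGraph_reachable_restrictColoring_of_adj S hadj)

theorem exists_reachable_restrictColoring_eq_of_adj {v : W} [Fintype (G.neighborSet v)]
    (hdeg : G.degree v ≤ k - 2) (α : {f : W → Fin k // IsColoring G k f})
    {δ : {f : delSet v → Fin k // IsColoring (G.induce (delSet v)) k f}}
    (hadj : (colorGraph (G.induce (delSet v)) k).Adj (restrictColoring G k (delSet v) α) δ) :
    ∃ α', (colorGraph G k).Reachable α α' ∧ restrictColoring G k (delSet v) α' = δ := by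
  classical
  obtain ⟨u, hu, hδ⟩ := hadj
  have hδ_eq : ∀ x, x ≠ u → α.1 x = δ.1 x := fun x hx => not_imp_comm.1 (hδ x) hx
  -- `hu` exhibits two distinct colors, so `k ≥ 2` and the truncated `k - 2` is honest.
  have hk : G.degree v + 1 < k := by
    have := Fin.val_ne_of_ne hu
    omega
  obtain ⟨c, hcu, hc⟩ := exists_ne_forall_adj_ne hk α.1 (δ.1 u)
  let α₁ : {f : W → Fin k // IsColoring G k f} :=
    ⟨Function.update α.1 v c, α.2.update hc⟩
  have hα₁ : ∀ y, G.Adj u y → α₁.1 y ≠ δ.1 u := by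
    intro y huy
    rcases eq_or_ne y v with rfl | hyv
    · simpa [α₁] using hcu
    · have hyu : (⟨y, hyv⟩ : delSet v) ≠ u := fun h =>
        G.ne_of_adj huy (congrArg Subtype.val h).symm
      simpa [α₁, Function.update_of_ne hyv, hδ_eq _ hyu] using (δ.2 u ⟨y, hyv⟩ huy).symm
  let α₂ : {f : W → Fin k // IsColoring G k f} :=
    ⟨Function.update α₁.1 u (δ.1 u), α₁.2.update hα₁⟩
  refine ⟨α₂, ?_, ?_⟩
  · have hαα₁ := colorGraph_reachable_of_forall_ne α₁ α v fun _ hx =>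
      Function.update_of_ne hx _ _
    have hα₁α₂ := colorGraph_reachable_of_forall_ne α₂ α₁ u fun _ hx =>
      Function.update_of_ne hx _ _
    exact hαα₁.symm.trans hα₁α₂.symm
  · refine Subtype.ext <| funext fun x => ?_
    rcases eq_or_ne x u with hxu | hxu
    · simp [restrictColoring, α₂, hxu]
    · simp [restrictColoring, α₂, α₁, Function.update_of_ne (Subtype.val_injective.ne hxu),
        Function.update_of_ne x.2, hδ_eq x hxu]

theorem colorGraph_reachable_of_reachable_restrictColoring {v : W} [Fintype (G.neighborSet v)]
    (hdeg : G.degree v ≤ k - 2) {α β : {f : W → Fin k // IsColoring G k f}}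
    (h : (colorGraph (G.induce (delSet v)) k).Reachable
      (restrictColoring G k (delSet v) α) (restrictColoring G k (delSet v) β)) :
    (colorGraph G k).Reachable α β := by
  have hlift : ∀ δ, (colorGraph (G.induce (delSet v)) k).Reachable
      (restrictColoring G k (delSet v) α) δ →
      ∃ α', (colorGraph G k).Reachable α α' ∧ restrictColoring G k (delSet v) α' = δ := by
    intro δ hδ
    rw [reachable_iff_reflTransGen] at hδ
    induction hδ with
    | refl => exact ⟨α, Reachable.refl α, rfl⟩
    | tail _ hadj ih =>
      obtain ⟨α', hαα', hα'⟩ := ih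
      obtain ⟨α'', hα'α'', hα''⟩ :=
        exists_reachable_restrictColoring_eq_of_adj hdeg α' (hα' ▸ hadj)
      exact ⟨α'', hαα'.trans hα'α'', hα''⟩
  obtain ⟨α', hαα', hα'⟩ := hlift _ h
  exact hαα'.trans <| colorGraph_reachable_of_forall_ne α' β v fun x hx =>
    congrFun (congrArg Subtype.val hα') ⟨x, hx⟩

theorem statement_5_general {V : Type} [Fintype V]
    (G : SimpleGraph V) [DecidableRel G.Adj] (k : ℕ)
    (α β : {f : V → Fin k // IsColoring G k f}) (v : V) (hdeg : G.degree v ≤ k - 2) :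
    (colorGraph G k).Reachable α β ↔
      (colorGraph (G.induce (delSet v)) k).Reachable
        (restrictColoring G k (delSet v) α) (restrictColoring G k (delSet v) β) :=
  ⟨colorGraph_reachable_restrictColoring _,
    colorGraph_reachable_of_reachable_restrictColoring hdeg⟩

/-- if `v` has degree at most `k - 2`, then `C_k(G)` contains a path from
`α` to `β` iff `C_k(G-v)` contains a path between the restrictions of `α` and `β`. -/
theorem statement_5 {V : Type} [Fintype V] [DecidableEq V]
    (G : SimpleGraph V) [DecidableRel G.Adj] (k : ℕ) (hk : 1 ≤ k)
    (α β : {f : V → Fin k // IsColoring G k f}) (v : V) (hdeg : G.degree v ≤ k - 2) :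
    (colorGraph G k).Reachable α β ↔
      (colorGraph (G.induce (delSet v)) k).Reachable
        (restrictColoring G k (delSet v) α) (restrictColoring G k (delSet v) β) :=
  statement_5_general G k α β v hdeg
end

section
/- Let k ≥ 1, let G' = (V',E') be a subgraph of a graph G = (V,E), and let α and β be two k-colorings of G. Let α' and β' be the restrictions of α and β to V'. Then for any T' ⊆ V' and T ⊆ V: if the α'-node and the β'-node lie in different connected components of C^c_k(G',T'), then the α-node and the β-node lie in different connected components of C^c_k(G,T). -/
open SimpleGraph

/-!
Restricting colorings of `G` to a subgraph `G'` sends each recoloring step either to a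
recoloring step or to a constant one, so it maps walks in `C_k(G)` to walks in `C_k(G')`.
Contracting label components neither creates nor destroys connectivity, so the
`α`-node and `β`-node are connected in `C^c_k(G,T)` exactly when `α` and `β` are
connected in `C_k(G)`, whatever `T` is.
-/

lemma SimpleGraph.Reachable.of_adj_imp_eq_or_adj {X Y : Type*} {G : SimpleGraph X}
    {H : SimpleGraph Y} (f : X → Y) (hf : ∀ a b, G.Adj a b → f a = f b ∨ H.Adj (f a) (f b))
    {a b : X} (h : G.Reachable a b) : H.Reachable (f a) (f b) := by
  rw [reachable_iff_reflTransGen] at h ⊢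
  refine h.lift' f fun x y hxy => ?_
  rcases hf x y hxy with heq | hadj
  · change Relation.ReflTransGen H.Adj (f x) (f y)
    exact heq ▸ Relation.ReflTransGen.refl
  · exact Relation.ReflTransGen.single hadj

lemma sameLabelSub_le {N L : Type*} (H : SimpleGraph N) (f : N → L) :
    sameLabelSub H f ≤ H := fun _ _ h => h.1

section Contraction

variable {N L : Type*} {H : SimpleGraph N} {f : N → L}

def quotGraph.toComponent : (sameLabelSub H f).ConnectedComponent → H.ConnectedComponent :=
  ConnectedComponent.map (Hom.ofLE (sameLabelSub_le H f))

lemma quotGraph.toComponent_eq_of_adj {c d : (sameLabelSub H f).ConnectedComponent}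
    (h : (quotGraph H f).Adj c d) : quotGraph.toComponent c = quotGraph.toComponent d := by
  obtain ⟨-, a, b, rfl, rfl, hab⟩ := h
  exact ConnectedComponent.eq.mpr hab.reachable

theorem quotGraph_reachable_mk_iff {a b : N} :
    (quotGraph H f).Reachable ((sameLabelSub H f).connectedComponentMk a)
      ((sameLabelSub H f).connectedComponentMk b) ↔ H.Reachable a b := by
  constructor
  · intro h
    have := h.of_adj_imp_eq_or_adj (H := (⊥ : SimpleGraph H.ConnectedComponent))
      quotGraph.toComponent fun _ _ hcd => .inl (quotGraph.toComponent_eq_of_adj hcd)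
    exact ConnectedComponent.eq.mp (reachable_bot.mp this)
  · refine fun h => h.of_adj_imp_eq_or_adj _ fun x y hxy => ?_
    by_cases hc : (sameLabelSub H f).connectedComponentMk x =
        (sameLabelSub H f).connectedComponentMk y
    · exact .inl hc
    · exact .inr ⟨hc, x, y, rfl, rfl, hxy⟩

end Contraction

section Pullback

variable {X Y : Type*} {G' : SimpleGraph X} {G : SimpleGraph Y} {k : ℕ}

def pullbackColoring (φ : G' →g G) (γ : {α : Y → Fin k // IsColoring G k α}) :
    {α : X → Fin k // IsColoring G' k α} :=
  ⟨γ.1 ∘ φ, fun _ _ h => γ.2 _ _ (φ.map_adj h)⟩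

-- Injectivity of `φ` keeps the recolored vertex unique.
lemma pullbackColoring_eq_or_adj (φ : G' →g G) (hφ : Function.Injective φ)
    {γ δ : {α : Y → Fin k // IsColoring G k α}} (h : (colorGraph G k).Adj γ δ) :
    pullbackColoring φ γ = pullbackColoring φ δ ∨
      (colorGraph G' k).Adj (pullbackColoring φ γ) (pullbackColoring φ δ) := by
  obtain ⟨y, -, hy⟩ := h
  by_cases hdiff : ∃ x, γ.1 (φ x) ≠ δ.1 (φ x)
  · obtain ⟨x, hx⟩ := hdiff
    exact .inr ⟨x, hx, fun x' hx' => hφ ((hy _ hx').trans (hy _ hx).symm)⟩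
  · simp only [not_exists, not_not] at hdiff
    exact .inl (Subtype.ext (funext hdiff))

lemma colorGraph_reachable_pullbackColoring (φ : G' →g G) (hφ : Function.Injective φ)
    {γ δ : {α : Y → Fin k // IsColoring G k α}} (h : (colorGraph G k).Reachable γ δ) :
    (colorGraph G' k).Reachable (pullbackColoring φ γ) (pullbackColoring φ δ) :=
  h.of_adj_imp_eq_or_adj _ fun _ _ => pullbackColoring_eq_or_adj φ hφ

end Pullback

theorem statement_16_general {V : Type}
    (G : SimpleGraph V) (k : ℕ)
    (V' : Set V) (G' : SimpleGraph ↥V')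
    (hsub : ∀ a b : ↥V', G'.Adj a b → G.Adj a.1 b.1)
    (α β : {f : V → Fin k // IsColoring G k f})
    (T : Set V) (T' : Set ↥V')
    (α' β' : {f : ↥V' → Fin k // IsColoring G' k f})
    (hα' : α'.1 = fun u => α.1 u.1) (hβ' : β'.1 = fun u => β.1 u.1) :
    ¬ (CSG G' k T').Reachable (csgNode G' k T' α') (csgNode G' k T' β') →
      ¬ (CSG G k T).Reachable (csgNode G k T α) (csgNode G k T β) := by
  intro hsep hreach
  let φ : G' →g G := ⟨Subtype.val, hsub _ _⟩
  have hα : pullbackColoring φ α = α' := Subtype.ext hα'.symm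
  have hβ : pullbackColoring φ β = β' := Subtype.ext hβ'.symm
  have hcolor : (colorGraph G k).Reachable α β := quotGraph_reachable_mk_iff.mp hreach
  apply hsep
  rw [← hα, ← hβ]
  exact quotGraph_reachable_mk_iff.mpr
    (colorGraph_reachable_pullbackColoring φ Subtype.val_injective hcolor)

/-- if `G'` is a subgraph of `G` (on vertex set `V' ⊆ V`), `α, β` are
`k`-colorings of `G` restricting to `α', β'` on `V'`, and the `α'`-node and `β'`-node
are separated in `C^c_k(G',T')`, then the `α`-node and `β`-node are separated in
`C^c_k(G,T)`. -/
theorem statement_16 {V : Type} [Fintype V] [DecidableEq V]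
    (G : SimpleGraph V) (k : ℕ) (hk : 1 ≤ k)
    (V' : Set V) (G' : SimpleGraph ↥V')
    (hsub : ∀ a b : ↥V', G'.Adj a b → G.Adj a.1 b.1)
    (α β : {f : V → Fin k // IsColoring G k f})
    (T : Set V) (T' : Set ↥V')
    (α' β' : {f : ↥V' → Fin k // IsColoring G' k f})
    (hα' : α'.1 = fun u => α.1 u.1) (hβ' : β'.1 = fun u => β.1 u.1) :
    ¬ (CSG G' k T').Reachable (csgNode G' k T' α') (csgNode G' k T' β') →
      ¬ (CSG G k T).Reachable (csgNode G k T α) (csgNode G k T β) :=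
  statement_16_general G k V' G' hsub α β T T' α' β' hα' hβ'
end
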